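/- Let M be a real matrix whose columns are indexed by a finite set U, and let γ = min_{k ∈ U} dist(M_{:,k}, span{M_{:,k'} : k' ∈ U, k' ≠ k}), where dist denotes Euclidean distance from a vector to a linear subspace. Then for every real vector z indexed by U, ‖M z‖ ≥ γ · ‖z‖_∞, where ‖·‖ is the Euclidean norm and ‖z‖_∞ = max_{k ∈ U} |z_k|. -/

import Mathlib

open MeasureTheory ProbabilityTheory Matrix
open scoped NNReal ENNReal

/-- The `k`-th column of `M`, as a vector of Euclidean space. -/
noncomputable def matCol {ι κ : Type*} [Fintype ι] (M : Matrix ι κ ℝ) (k : κ) :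
    EuclideanSpace ℝ ι :=
  WithLp.toLp 2 (fun i => M i k)

/-- If each column of `M` is at Euclidean distance at least `γ` from the span of the other
columns, then `‖M z‖ ≥ γ ‖z‖_∞` for every vector `z`. -/
theorem norm_mulVec_ge_gamma_mul_linf {ι κ : Type*} [Fintype ι] [Fintype κ] [Nonempty κ]
    (M : Matrix ι κ ℝ) (z : κ → ℝ) (γ : ℝ)
    (hγ : γ = ⨅ k : κ, Metric.infDist (matCol M k)
      (Submodule.span ℝ (matCol M '' {k' | k' ≠ k}) : Set (EuclideanSpace ℝ ι))) :
    γ * (⨆ k, |z k|) ≤ Real.sqrt (∑ i, (M.mulVec z i) ^ 2) := by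
  classical
  -- The vector M z as an element of Euclidean space
  set w : EuclideanSpace ℝ ι := WithLp.toLp 2 (fun i => M.mulVec z i) with hw
  have hwnorm : Real.sqrt (∑ i, (M.mulVec z i) ^ 2) = ‖w‖ := by
    rw [EuclideanSpace.norm_eq]
    congr 1
    refine Finset.sum_congr rfl fun i _ => ?_
    rw [Real.norm_eq_abs, sq_abs]
  rw [hwnorm]
  -- γ is nonnegative
  have hγ0 : 0 ≤ γ := by
    rw [hγ]
    exact Real.iInf_nonneg fun k => Metric.infDist_nonneg
  -- pick k₀ maximizing |z k|
  obtain ⟨k₀, hk₀⟩ := Finite.exists_max (fun k => |z k|)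
  have hsup : (⨆ k, |z k|) = |z k₀| := by
    refine le_antisymm (ciSup_le hk₀) (le_ciSup (f := fun k => |z k|) (Finite.bddAbove_range _) k₀)
  rw [hsup]
  set S : Submodule ℝ (EuclideanSpace ℝ ι) :=
    Submodule.span ℝ (matCol M '' {k' | k' ≠ k₀}) with hS
  have hγle : γ ≤ Metric.infDist (matCol M k₀) (S : Set (EuclideanSpace ℝ ι)) := by
    rw [hγ]
    exact ciInf_le (Finite.bddBelow_range _) k₀
  -- decompose w
  set v : EuclideanSpace ℝ ι := ∑ k ∈ Finset.univ.erase k₀, z k • matCol M k with hv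
  have hvS : v ∈ S := by
    refine Submodule.sum_mem _ fun k hk => ?_
    refine Submodule.smul_mem _ _ (Submodule.subset_span ?_)
    exact ⟨k, Finset.ne_of_mem_erase hk, rfl⟩
  have hdecomp : w = z k₀ • matCol M k₀ + v := by
    ext i
    have : w i = ∑ k, (z k • matCol M k) i := by
      simp [hw, Matrix.mulVec, dotProduct, matCol, mul_comm]
    rw [this, ← Finset.add_sum_erase _ _ (Finset.mem_univ k₀)]
    simp only [hv, Finset.sum_apply, Pi.add_apply, Pi.smul_apply, smul_eq_mul, matCol]
    simp
  rcases eq_or_ne (z k₀) 0 with hz | hz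
  · rw [hz, abs_zero, mul_zero]
    exact norm_nonneg w
  -- main case
  have key : Metric.infDist (matCol M k₀) (S : Set (EuclideanSpace ℝ ι)) *
      |z k₀| ≤ ‖w‖ := by
    have hmem : -((z k₀)⁻¹ • v) ∈ S := S.neg_mem (S.smul_mem _ hvS)
    have h1 : Metric.infDist (matCol M k₀) (S : Set (EuclideanSpace ℝ ι)) ≤
        ‖matCol M k₀ + (z k₀)⁻¹ • v‖ := by
      calc Metric.infDist (matCol M k₀) (S : Set (EuclideanSpace ℝ ι))
          ≤ dist (matCol M k₀) (-((z k₀)⁻¹ • v)) := Metric.infDist_le_dist_of_mem hmem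
        _ = ‖matCol M k₀ + (z k₀)⁻¹ • v‖ := by rw [dist_eq_norm, sub_neg_eq_add]
    have h2 : w = z k₀ • (matCol M k₀ + (z k₀)⁻¹ • v) := by
      rw [hdecomp, smul_add, smul_smul, mul_inv_cancel₀ hz, one_smul]
    rw [h2, norm_smul, Real.norm_eq_abs, mul_comm]
    exact mul_le_mul_of_nonneg_left h1 (abs_nonneg _)
  calc γ * |z k₀| ≤ Metric.infDist (matCol M k₀) (S : Set (EuclideanSpace ℝ ι)) * |z k₀| :=
        mul_le_mul_of_nonneg_right hγle (abs_nonneg _)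
    _ ≤ ‖w‖ := key
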